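/- arXiv:1207.5215 — 2 statements merged into one kernel-verified Lean document; each statement's English description precedes it below -/
import Mathlib

section
/- Let G = (V,E) be a finite graph with optimal density d* = max over nonempty S ⊆ V of |E(S)|/|S|. Then the optimal value of the linear program maximizing ∑_{e∈E} y_e subject to ∑_{i∈V} x_i = 1, y_e ≤ x_i for every edge e and endpoint i of e, and x, y ≥ 0, equals d*. -/
/-!
For a fixed `x` the best choice is `y_{ab} = min (x a) (x b)`, so the value of the LP is the maximum of
`∑_{ab ∈ E} min (x a) (x b)` over probability vectors `x`. The uniform distribution on a densest set `S`
attains `|E(S)| / |S| = d*`. Conversely, `∑_{ab ∈ E} min (x a) (x b) ≤ d* ∑ᵢ xᵢ` for every `x ≥ 0` by a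
discrete layer-cake argument: lowering `x` by its minimum value `c` on its support `S` decreases the left
side by `c |E(S)|` and the right side by `c d* |S|`, and removes a vertex from the support.
-/

open Finset

namespace Sym2

variable {V α : Type*}

theorem le_inf_map_iff [LinearOrder α] {x : V → α} {c : α} {e : Sym2 V} :
    c ≤ (e.map x).inf ↔ ∀ i ∈ e, c ≤ x i := by
  induction e with
  | _ a b => simp

theorem inf_map_le_of_mem [LinearOrder α] {x : V → α} {e : Sym2 V} {i : V} (hi : i ∈ e) :
    (e.map x).inf ≤ x i :=
  le_inf_map_iff.1 le_rfl i hi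

variable [Fintype V] [DecidableEq V] [AddCommMonoid α] [LinearOrder α] [IsOrderedAddMonoid α]

theorem inf_map_ite_add {S : Finset V} {c : α} {w : V → α} (hc : 0 ≤ c) (hw : ∀ i, 0 ≤ w i)
    (hwS : ∀ i ∉ S, w i = 0) (e : Sym2 V) :
    (e.map fun i => (if i ∈ S then c else 0) + w i).inf =
      (if ∀ i ∈ e, i ∈ S then c else 0) + (e.map w).inf := by
  induction e with
  | _ a b =>
    by_cases ha : a ∈ S <;> by_cases hb : b ∈ S <;>
      simp [ha, hb, hwS, min_add_add_left, hw a, hw b, add_nonneg hc]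

end Sym2

namespace SimpleGraph

variable {V R : Type*} [Fintype V] [DecidableEq V] (G : SimpleGraph V) [DecidableRel G.Adj]
  [CommRing R] [LinearOrder R] [IsOrderedRing R]

theorem sum_inf_map_le_mul_sum {d : R}
    (hd : ∀ S : Finset V, S.Nonempty →
      (#(G.edgeFinset.filter fun e => ∀ v ∈ e, v ∈ S) : R) ≤ d * #S)
    {x : V → R} (hx : ∀ i, 0 ≤ x i) :
    ∑ e ∈ G.edgeFinset, (e.map x).inf ≤ d * ∑ i, x i := by
  suffices ∀ S : Finset V, ∀ x : V → R, (∀ i, 0 ≤ x i) → (∀ i ∉ S, x i = 0) →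
      ∑ e ∈ G.edgeFinset, (e.map x).inf ≤ d * ∑ i, x i from
    this univ x hx (by simp)
  intro S
  induction S using Finset.strongInduction with
  | H S ih =>
  intro x hx hxS
  rcases S.eq_empty_or_nonempty with rfl | hS
  · obtain rfl : x = 0 := funext fun i => hxS i (notMem_empty i)
    refine (sum_nonpos fun e _ => Sym2.inf_map_le_of_mem (x := 0) (Sym2.out_fst_mem e)).trans ?_
    simp
  obtain ⟨i₀, hi₀, hmin⟩ := S.exists_min_image x hS
  set c := x i₀
  have hc : 0 ≤ c := hx i₀
  set w : V → R := fun i => x i - if i ∈ S then c else 0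
  have hw : ∀ i, 0 ≤ w i := by
    intro i
    by_cases hi : i ∈ S <;> simp [w, hi, hmin, hx]
  have hwS : ∀ i ∉ S.erase i₀, w i = 0 := by
    intro i hi
    by_cases hi' : i = i₀
    · simp [w, hi', hi₀, c]
    · have hiS : i ∉ S := fun h => hi (mem_erase.2 ⟨hi', h⟩)
      simp [w, hiS, hxS i hiS]
  have hxw : ∀ i, x i = (if i ∈ S then c else 0) + w i := fun i => by simp [w]
  have hE : ∑ e ∈ G.edgeFinset, (e.map x).inf =
      c * #(G.edgeFinset.filter fun e => ∀ v ∈ e, v ∈ S) + ∑ e ∈ G.edgeFinset, (e.map w).inf := by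
    rw [funext hxw]
    simp_rw [Sym2.inf_map_ite_add hc hw (fun i hi => hwS i (mt mem_of_mem_erase hi))]
    rw [sum_add_distrib, sum_ite, sum_const_zero, add_zero, sum_const, nsmul_eq_mul, mul_comm]
  have hV : ∑ i, x i = c * #S + ∑ i, w i := by
    rw [sum_congr rfl fun i _ => hxw i, sum_add_distrib, sum_ite_mem, univ_inter, sum_const,
      nsmul_eq_mul, mul_comm]
  calc ∑ e ∈ G.edgeFinset, (e.map x).inf
      ≤ c * (d * #S) + d * ∑ i, w i :=
        hE ▸ add_le_add (mul_le_mul_of_nonneg_left (hd S hS) hc)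
          (ih _ (erase_ssubset hi₀) w hw hwS)
    _ = d * ∑ i, x i := by rw [hV]; ring

end SimpleGraph

theorem stmt_17_general {V : Type*} [Fintype V] [DecidableEq V]
    (G : SimpleGraph V) [DecidableRel G.Adj]
    (dstar : ℝ)
    (hd : IsGreatest {d : ℝ | ∃ S : Finset V, S.Nonempty ∧
      d = ((G.edgeFinset.filter (fun e => ∀ v ∈ e, v ∈ S)).card : ℝ) / (S.card : ℝ)} dstar) :
    IsGreatest {v : ℝ | ∃ (x : V → ℝ) (y : Sym2 V → ℝ),
      (∑ i, x i) = 1 ∧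
      (∀ i, 0 ≤ x i) ∧
      (∀ e ∈ G.edgeFinset, 0 ≤ y e) ∧
      (∀ e ∈ G.edgeFinset, ∀ i ∈ e, y e ≤ x i) ∧
      v = ∑ e ∈ G.edgeFinset, y e} dstar := by
  obtain ⟨⟨S, hS, hSd⟩, hmax⟩ := hd
  have hScard : (0 : ℝ) < #S := by exact_mod_cast hS.card_pos
  refine ⟨?_, ?_⟩
  · set x : V → ℝ := fun i => if i ∈ S then (#S : ℝ)⁻¹ else 0
    have hx : ∀ i, 0 ≤ x i := fun i => by positivity
    have hy : ∀ e : Sym2 V, (e.map x).inf = if ∀ v ∈ e, v ∈ S then (#S : ℝ)⁻¹ else 0 := by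
      rintro ⟨a, b⟩
      by_cases ha : a ∈ S <;> by_cases hb : b ∈ S <;> simp [x, ha, hb]
    refine ⟨x, fun e => (e.map x).inf, ?_, hx, fun e _ => Sym2.le_inf_map_iff.2 fun i _ => hx i,
      fun e _ i hi => Sym2.inf_map_le_of_mem hi, ?_⟩
    · simp [x, sum_ite_mem, hScard.ne']
    · simp_rw [hSd, hy, sum_ite, sum_const_zero, add_zero, sum_const, nsmul_eq_mul, div_eq_mul_inv]
  · rintro v ⟨x, y, hx1, hx, -, hyx, rfl⟩
    have hdens : ∀ T : Finset V, T.Nonempty →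
        (#(G.edgeFinset.filter fun e => ∀ v ∈ e, v ∈ T) : ℝ) ≤ dstar * #T := fun T hT =>
      (div_le_iff₀ (by exact_mod_cast hT.card_pos)).1 (hmax ⟨T, hT, rfl⟩)
    calc ∑ e ∈ G.edgeFinset, y e
        ≤ ∑ e ∈ G.edgeFinset, (e.map x).inf :=
          sum_le_sum fun e he => Sym2.le_inf_map_iff.2 (hyx e he)
      _ ≤ dstar * ∑ i, x i := G.sum_inf_map_le_mul_sum hdens hx
      _ = dstar := by rw [hx1, mul_one]

theorem stmt_17 {V : Type*} [Fintype V] [DecidableEq V] [Nonempty V]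
    (G : SimpleGraph V) [DecidableRel G.Adj]
    (dstar : ℝ)
    (hd : IsGreatest {d : ℝ | ∃ S : Finset V, S.Nonempty ∧
      d = ((G.edgeFinset.filter (fun e => ∀ v ∈ e, v ∈ S)).card : ℝ) / (S.card : ℝ)} dstar) :
    IsGreatest {v : ℝ | ∃ (x : V → ℝ) (y : Sym2 V → ℝ),
      (∑ i, x i) = 1 ∧
      (∀ i, 0 ≤ x i) ∧
      (∀ e ∈ G.edgeFinset, 0 ≤ y e) ∧
      (∀ e ∈ G.edgeFinset, ∀ i ∈ e, y e ≤ x i) ∧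
      v = ∑ e ∈ G.edgeFinset, y e} dstar :=
  stmt_17_general G dstar hd
end

section
/- Let w : U → ℝ≥0 be weights on a finite set U, k ≥ 0, and suppose H* ⊆ U satisfies ∑_{i∈H*} w(i) ≥ k. Let D ⊆ U be any set, and greedily add to D elements of U \ D in non-increasing weight order (largest weights first) until the total weight of the added elements plus ∑_{i∈D} w(i) is at least k (assuming ∑_{i∈U} w(i) ≥ k). If r elements are added in this way, then r ≤ 2|H*|. -/
theorem stmt_19 {U : Type*} [Fintype U] [DecidableEq U]
    (w : U → ℝ) (hw : ∀ i, 0 ≤ w i)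
    (k : ℝ) (hk : 0 ≤ k)
    (Hstar : Finset U) (hHstar : k ≤ ∑ i ∈ Hstar, w i)
    (D : Finset U) (hU : k ≤ ∑ i ∈ (Finset.univ : Finset U), w i)
    (T : Finset U) (hT : T ⊆ Finset.univ \ D)
    (horder : ∀ a ∈ T, ∀ b ∈ (Finset.univ \ D) \ T, w b ≤ w a)
    (hreached : k ≤ (∑ i ∈ D, w i) + ∑ i ∈ T, w i)
    (hminimal : ∀ a ∈ T, (∑ i ∈ D, w i) + (∑ i ∈ T, w i) - w a < k) :
    T.card ≤ 2 * Hstar.card := by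
  by_contra hcon
  push_neg at hcon
  have hTne : T.Nonempty := Finset.card_pos.mp (by omega)
  obtain ⟨a, haT, hamin⟩ := T.exists_min_image w hTne
  have hs0 : 0 ≤ w a := hw a
  set m := Hstar.card with hm
  -- bound on the leftover part of Hstar
  have hHO : ∑ i ∈ ((Hstar \ T) \ D), w i ≤ (m : ℝ) * w a := by
    calc ∑ i ∈ ((Hstar \ T) \ D), w i ≤ ∑ _ ∈ ((Hstar \ T) \ D), w a := by
          apply Finset.sum_le_sum
          intro i hi
          apply horder a haT
          simp only [Finset.mem_sdiff, Finset.mem_univ, true_and] at hi ⊢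
          tauto
      _ = (((Hstar \ T) \ D).card : ℝ) * w a := by
          rw [Finset.sum_const, nsmul_eq_mul]
      _ ≤ (m : ℝ) * w a := by
          apply mul_le_mul_of_nonneg_right _ hs0
          have : ((Hstar \ T) \ D).card ≤ m :=
            Finset.card_le_card (Finset.sdiff_subset.trans Finset.sdiff_subset)
          exact_mod_cast this
  have hcard : m + 1 ≤ (T \ Hstar).card := by
    have := Finset.card_le_card_sdiff_add_card (s := T) (t := Hstar)
    omega
  have hTlow : (m : ℝ) * w a + w a ≤ ∑ i ∈ (T \ Hstar), w i := by
    calc (m : ℝ) * w a + w a = ((m + 1 : ℕ) : ℝ) * w a := by push_cast; ring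
      _ ≤ ((T \ Hstar).card : ℝ) * w a := by
          apply mul_le_mul_of_nonneg_right _ hs0
          exact_mod_cast hcard
      _ = ∑ _ ∈ (T \ Hstar), w a := by rw [Finset.sum_const, nsmul_eq_mul]
      _ ≤ ∑ i ∈ (T \ Hstar), w i :=
          Finset.sum_le_sum (fun i hi => hamin i (Finset.mem_sdiff.mp hi).1)
  -- splits
  have hsplitH : ∑ i ∈ Hstar, w i
      = ∑ i ∈ (Hstar ∩ T), w i + (∑ i ∈ ((Hstar \ T) ∩ D), w i + ∑ i ∈ ((Hstar \ T) \ D), w i) := by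
    rw [Finset.sum_inter_add_sum_sdiff (Hstar \ T) D w,
        Finset.sum_inter_add_sum_sdiff Hstar T w]
  have hsplitT : ∑ i ∈ T, w i = ∑ i ∈ (T ∩ Hstar), w i + ∑ i ∈ (T \ Hstar), w i :=
    (Finset.sum_inter_add_sum_sdiff T Hstar w).symm
  have hcomm : ∑ i ∈ (Hstar ∩ T), w i = ∑ i ∈ (T ∩ Hstar), w i := by
    rw [Finset.inter_comm]
  have hDle : ∑ i ∈ ((Hstar \ T) ∩ D), w i ≤ ∑ i ∈ D, w i :=
    Finset.sum_le_sum_of_subset_of_nonneg Finset.inter_subset_right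
      (fun i _ _ => hw i)
  have := hminimal a haT
  linarith
end
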